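/- Let σ^∨ ⊆ ℝ^d be a full-dimensional strongly convex rational polyhedral cone, w ∈ σ^∨ ∩ ℚ^d, and let A ⊆ σ^∨ ∩ ℤ^d be finite nonempty with Newton polyhedron P = conv(A) + σ^∨ and t > 0 rational. Then ⋃_{n ≥ 1} ⋃_{f} (f + w + Int(σ^∨)) = w + Int(tP), where the inner union is over all f of the form (a₁ + ⋯ + a_m)/n with a_j ∈ A and m ≥ tn. Consequently the sum over all n and f of the monomial ideals with exponent sets {v : v − w − f ∈ Int(σ^∨)} has exponent set {v : v − w ∈ Int(tP)}. -/

import Mathlib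

/-!
Write `K` for the cone and `Q = conv(A)`, so that `Int(tP) = tQ + Int K`, because `K` has
nonempty interior. A point `f = (a₁ + ⋯ + a_m)/n` with `m ≥ tn` is `(m/n) q` with
`q = (a₁ + ⋯ + a_m)/m ∈ Q ⊆ K`, hence lies in `tQ + K`, and `K + Int K ⊆ Int K`. Conversely, if
`x - tq ∈ Int K` with `q = ∑ μ_b b`, openness gives some `t' > t` with `x - t'q ∈ Int K`, and
then `k_b = ⌊t' n μ_b⌋` has `∑ k_b ≥ tn` for large `n` while `t'q - (∑ k_b b)/n ∈ K`.
-/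

open Set Pointwise

noncomputable section

/-- The standard dot product pairing on `Fin d → ℝ`. -/
def dotR {d : ℕ} (m v : Fin d → ℝ) : ℝ := ∑ i, m i * v i

/-- The cast of an integer lattice vector to a real vector. -/
def zCast {d : ℕ} (u : Fin d → ℤ) : Fin d → ℝ := fun i => (u i : ℝ)

/-- The convex cone generated by finitely many vectors `v 0, …, v (s-1)`:
all nonnegative real combinations. -/
def coneOf {d s : ℕ} (v : Fin s → Fin d → ℝ) : Set (Fin d → ℝ) :=
  {x | ∃ c : Fin s → ℝ, (∀ i, 0 ≤ c i) ∧ x = ∑ i, c i • v i}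

/-- The dual cone of a set `σ`: all `m` pairing nonnegatively with every element of `σ`. -/
def dualCone {d : ℕ} (σ : Set (Fin d → ℝ)) : Set (Fin d → ℝ) :=
  {m | ∀ v ∈ σ, 0 ≤ dotR m v}

theorem Finset.exists_fin_family_sum_eq_sum_nsmul {α M : Type*} [AddCommMonoid M]
    (S : Finset α) (k : α → ℕ) (f : α → M) :
    ∃ a : Fin (∑ x ∈ S, k x) → α, (∀ j, a j ∈ S) ∧ ∑ j, f (a j) = ∑ x ∈ S, k x • f x := by
  classical
  induction S using Finset.induction_on with
  | empty =>
    simp only [Finset.sum_empty]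
    exact ⟨Fin.elim0, fun j => j.elim0, Fin.sum_univ_zero _⟩
  | @insert x S hx ih =>
    obtain ⟨a, haS, hsum⟩ := ih
    rw [Finset.sum_insert hx]
    refine ⟨Fin.append (fun _ => x) a, fun j => ?_, ?_⟩
    · refine Fin.addCases (fun i => ?_) (fun i => ?_) j
      · rw [Fin.append_left]; exact Finset.mem_insert_self x S
      · rw [Fin.append_right]; exact Finset.mem_insert_of_mem (haS i)
    · rw [Finset.sum_insert hx, Fin.sum_univ_add]
      simp only [Fin.append_left, Fin.append_right, Finset.sum_const, Finset.card_univ,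
        Fintype.card_fin, hsum]

theorem Finset.exists_fin_family_mem_image_iff {ι E : Type*} [DecidableEq E] {m : ℕ}
    (A : Finset ι) (φ : ι → E) (p : (Fin m → E) → Prop) :
    (∃ a : Fin m → ι, (∀ j, a j ∈ A) ∧ p (φ ∘ a)) ↔
      ∃ b : Fin m → E, (∀ j, b j ∈ A.image φ) ∧ p b := by
  refine ⟨fun ⟨a, ha, h⟩ => ⟨φ ∘ a, fun j => Finset.mem_image_of_mem φ (ha j), h⟩,
    fun ⟨b, hb, h⟩ => ?_⟩
  choose a ha hab using fun j => Finset.mem_image.1 (hb j)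
  exact ⟨a, ha, (funext hab : φ ∘ a = b) ▸ h⟩

theorem exists_nat_mul_le_sum_floor {ι : Type*} (B : Finset ι) (μ : ι → ℝ)
    (hμ : ∑ b ∈ B, μ b = 1) {t t' : ℝ} (htt' : t < t') :
    ∃ n : ℕ, 0 < n ∧ t * n ≤ ∑ b ∈ B, (⌊t' * n * μ b⌋₊ : ℝ) := by
  have hgap : 0 < t' - t := sub_pos.2 htt'
  obtain ⟨n, hn⟩ := exists_nat_gt (B.card / (t' - t))
  have hn0 : (0 : ℝ) < n := lt_of_le_of_lt (by positivity) hn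
  refine ⟨n, by exact_mod_cast hn0, ?_⟩
  have hcard : (B.card : ℝ) < (t' - t) * n := by rwa [div_lt_iff₀' hgap] at hn
  calc t * n ≤ ∑ b ∈ B, (t' * n * μ b - 1) := by
        rw [Finset.sum_sub_distrib, ← Finset.mul_sum, hμ, Finset.sum_const, nsmul_one]
        linarith
    _ ≤ ∑ b ∈ B, (⌊t' * n * μ b⌋₊ : ℝ) :=
        Finset.sum_le_sum fun b _ => by linarith [Nat.lt_floor_add_one (t' * n * μ b)]

theorem coneOf_eq_hull {d s : ℕ} (v : Fin s → Fin d → ℝ) :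
    coneOf v = PointedCone.hull ℝ (range v) := by
  ext x
  rw [SetLike.mem_coe, Submodule.mem_span_range_iff_exists_fun]
  constructor
  · rintro ⟨c, hc, rfl⟩
    exact ⟨fun i => ⟨c i, hc i⟩, rfl⟩
  · rintro ⟨c, rfl⟩
    exact ⟨fun i => c i, fun i => (c i).2, rfl⟩

namespace PointedCone

theorem interior_nonempty_of_span_eq_top {V : Type*} [NormedAddCommGroup V] [NormedSpace ℝ V]
    [FiniteDimensional ℝ V] (C : PointedCone ℝ V) (h : Submodule.span ℝ (C : Set V) = ⊤) :
    (interior (C : Set V)).Nonempty := by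
  refine C.convex.interior_nonempty_iff_affineSpan_eq_top.2 (SetLike.coe_injective ?_)
  rw [← insert_eq_of_mem C.zero_mem, affineSpan_insert_zero, h]
  rfl

variable {E : Type*} [AddCommGroup E] [Module ℝ E] (K : PointedCone ℝ E)

theorem smul_set_eq {r : ℝ} (hr : 0 < r) : r • (K : Set E) = K := by
  refine (smul_set_subset_iff.2 fun _ hy => K.smul_mem hr.le hy).antisymm fun y hy => ?_
  exact ⟨r⁻¹ • y, K.smul_mem (inv_nonneg.2 hr.le) hy, smul_inv_smul₀ hr.ne' y⟩

theorem smul_set_add_eq {r : ℝ} (hr : 0 < r) (S : Set E) :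
    r • (S + (K : Set E)) = r • S + (K : Set E) := by
  rw [smul_add, K.smul_set_eq hr]

theorem sum_smul_sub_sum_smul_mem {ι : Type*} {B : Finset ι} {v : ι → E} {c c' : ι → ℝ}
    (hv : ∀ b ∈ B, v b ∈ K) (hc : ∀ b ∈ B, c' b ≤ c b) :
    ∑ b ∈ B, c b • v b - ∑ b ∈ B, c' b • v b ∈ K := by
  rw [← Finset.sum_sub_distrib]
  exact K.sum_mem fun b hb => by
    rw [← sub_smul]; exact K.smul_mem (sub_nonneg.2 (hc b hb)) (hv b hb)

variable [TopologicalSpace E]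

theorem smul_mem_interior [ContinuousConstSMul ℝ E] {r : ℝ} (hr : 0 < r) {x : E}
    (hx : x ∈ interior (K : Set E)) : r • x ∈ interior (K : Set E) := by
  have : r • x ∈ interior (r • (K : Set E)) := by
    rw [interior_smul₀ hr.ne']; exact smul_mem_smul_set hx
  rwa [K.smul_set_eq hr] at this

variable [IsTopologicalAddGroup E]

theorem add_mem_interior {x y : E} (hx : x ∈ K) (hy : y ∈ interior (K : Set E)) :
    x + y ∈ interior (K : Set E) :=
  interior_mono (add_subset_iff.2 fun _ ha _ hb => K.add_mem ha hb)
    (subset_interior_add_right (add_mem_add hx hy))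

variable {B : Finset E} {t : ℝ}

theorem mem_smul_convexHull_add_interior_of_sub_average_mem (hB : (B : Set E) ⊆ K)
    (ht : 0 < t) {x : E} {n m : ℕ} (hn : 0 < n) (hnm : t * n ≤ m) {a : Fin m → E}
    (ha : ∀ j, a j ∈ B) (hx : x - (n : ℝ)⁻¹ • ∑ j, a j ∈ interior (K : Set E)) :
    x ∈ t • convexHull ℝ (B : Set E) + interior (K : Set E) := by
  have hn' : (0 : ℝ) < n := by exact_mod_cast hn
  have hm : (0 : ℝ) < m := lt_of_lt_of_le (by positivity) hnm
  set q := (m : ℝ)⁻¹ • ∑ j, a j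
  have hq : q ∈ convexHull ℝ (B : Set E) := by
    simp only [q, Finset.smul_sum]
    refine (convex_convexHull ℝ _).sum_mem (fun _ _ => by positivity) ?_
      fun j _ => subset_convexHull ℝ _ (ha j)
    simp [hm.ne']
  have hcoef : 0 ≤ (m / n - t : ℝ) := sub_nonneg.2 ((le_div_iff₀ hn').2 hnm)
  have hsum : (m / n : ℝ) • q = (n : ℝ)⁻¹ • ∑ j, a j := by
    rw [smul_smul]; congr 1; field_simp
  refine ⟨t • q, smul_mem_smul_set hq, (m / n - t : ℝ) • q + (x - (n : ℝ)⁻¹ • ∑ j, a j),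
    K.add_mem_interior (K.smul_mem hcoef (convexHull_min hB K.convex hq)) hx, ?_⟩
  simp only [← hsum]
  module

variable [ContinuousSMul ℝ E]

theorem interior_add_eq (hK : (interior (K : Set E)).Nonempty) (S : Set E) :
    interior (S + (K : Set E)) = S + interior (K : Set E) := by
  refine Subset.antisymm (fun x hx => ?_) subset_interior_add_right
  obtain ⟨u, hu⟩ := hK
  have hcont : Continuous fun δ : ℝ => x - δ • u := by fun_prop
  have hx0 : x - (0 : ℝ) • u ∈ interior (S + (K : Set E)) := by simpa using hx
  obtain ⟨δ, hδ, hxδ⟩ :=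
    (hcont.continuousAt.eventually_mem (isOpen_interior.mem_nhds hx0)).exists_gt
  obtain ⟨s, hs, c, hc, hsc⟩ := interior_subset hxδ
  refine ⟨s, hs, c + δ • u, K.add_mem_interior hc (K.smul_mem_interior hδ hu), ?_⟩
  simp only [← add_assoc, hsc, sub_add_cancel]

theorem exists_sub_average_mem_interior_of_mem (hB : (B : Set E) ⊆ K) (ht : 0 < t) {x : E}
    (hx : x ∈ t • convexHull ℝ (B : Set E) + interior (K : Set E)) :
    ∃ n m : ℕ, 0 < n ∧ t * n ≤ m ∧ ∃ a : Fin m → E, (∀ j, a j ∈ B) ∧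
      x - (n : ℝ)⁻¹ • ∑ j, a j ∈ interior (K : Set E) := by
  obtain ⟨_, ⟨q, hq, rfl⟩, u, hu, rfl⟩ := hx
  -- Raising `t` to some `t' > t` leaves room to round the multiplicities down.
  have hcont : Continuous fun s : ℝ => t • q + u - s • q := by fun_prop
  obtain ⟨t', htt', hx'⟩ := (hcont.continuousAt.eventually_mem
    (isOpen_interior.mem_nhds (show t • q + u - t • q ∈ interior (K : Set E) by simpa))).exists_gt
  obtain ⟨μ, hμ0, hμ1, rfl⟩ := Finset.mem_convexHull'.1 hq
  obtain ⟨n, hn, hnk⟩ := exists_nat_mul_le_sum_floor B μ hμ1 htt'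
  set k : E → ℕ := fun b => ⌊t' * n * μ b⌋₊
  obtain ⟨a, ha, hak⟩ := B.exists_fin_family_sum_eq_sum_nsmul k id
  refine ⟨n, ∑ b ∈ B, k b, hn, by exact_mod_cast hnk, a, ha, ?_⟩
  have hn' : (0 : ℝ) < n := by exact_mod_cast hn
  have hfloor : t' • ∑ b ∈ B, μ b • b - (n : ℝ)⁻¹ • ∑ j, a j ∈ K := by
    simp only [id] at hak
    rw [hak, Finset.smul_sum, Finset.smul_sum]
    simp only [← Nat.cast_smul_eq_nsmul ℝ, smul_smul]
    refine K.sum_smul_sub_sum_smul_mem (fun b hb => hB hb) fun b hb => ?_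
    rw [inv_mul_le_iff₀ hn']
    have := Nat.floor_le (a := t' * n * μ b)
      (mul_nonneg (mul_nonneg (ht.trans htt').le hn'.le) (hμ0 b hb))
    linarith
  simpa using K.add_mem_interior hfloor hx'

theorem exists_sub_average_mem_interior_iff (hB : (B : Set E) ⊆ K) (ht : 0 < t) (x : E) :
    (∃ n m : ℕ, 0 < n ∧ t * n ≤ m ∧ ∃ a : Fin m → E, (∀ j, a j ∈ B) ∧
      x - (n : ℝ)⁻¹ • ∑ j, a j ∈ interior (K : Set E)) ↔
      x ∈ t • convexHull ℝ (B : Set E) + interior (K : Set E) :=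
  ⟨fun ⟨_, _, hn, hnm, _, ha, hx⟩ =>
    K.mem_smul_convexHull_add_interior_of_sub_average_mem hB ht hn hnm ha hx,
    K.exists_sub_average_mem_interior_of_mem hB ht⟩

end PointedCone

theorem union_of_translates_eq_interior_dilate_general
    {d s : ℕ} (g : Fin s → Fin d → ℤ)
    (C : Set (Fin d → ℝ)) (hC : C = coneOf fun i => zCast (g i))
    (hfd : Submodule.span ℝ C = ⊤)
    (w : Fin d → ℝ)
    (A : Finset (Fin d → ℤ)) (hAC : ∀ a ∈ A, zCast a ∈ C)
    (P : Set (Fin d → ℝ)) (hP : P = convexHull ℝ (zCast '' ↑A) + C)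
    (t : ℚ) (ht : 0 < t) :
    ({x : Fin d → ℝ | ∃ n m : ℕ, 0 < n ∧ t * (n : ℚ) ≤ (m : ℚ) ∧
        ∃ a : Fin m → Fin d → ℤ, (∀ j, a j ∈ A) ∧
          x - w - (n : ℝ)⁻¹ • (∑ j, zCast (a j)) ∈ interior C} =
      {w} + interior ((t : ℝ) • P)) ∧
    (∀ v : Fin d → ℤ,
      (∃ n m : ℕ, 0 < n ∧ t * (n : ℚ) ≤ (m : ℚ) ∧
        ∃ a : Fin m → Fin d → ℤ, (∀ j, a j ∈ A) ∧
          zCast v - w - (n : ℝ)⁻¹ • (∑ j, zCast (a j)) ∈ interior C) ↔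
      zCast v - w ∈ interior ((t : ℝ) • P)) := by
  classical
  set K := PointedCone.hull ℝ (range fun i => zCast (g i))
  rw [coneOf_eq_hull] at hC
  subst hC
  have hB : ((A.image zCast : Finset _) : Set (Fin d → ℝ)) ⊆ K := by
    simpa [subset_def] using hAC
  have htR : (0 : ℝ) < t := by exact_mod_cast ht
  have hint : interior ((t : ℝ) • P) = (t : ℝ) • convexHull ℝ ↑(A.image zCast) + interior K := by
    rw [hP, K.smul_set_add_eq htR, K.interior_add_eq (K.interior_nonempty_of_span_eq_top hfd),
      Finset.coe_image]
  have key : ∀ x, (∃ n m : ℕ, 0 < n ∧ t * (n : ℚ) ≤ (m : ℚ) ∧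
      ∃ a : Fin m → Fin d → ℤ, (∀ j, a j ∈ A) ∧
        x - w - (n : ℝ)⁻¹ • (∑ j, zCast (a j)) ∈ interior (K : Set _)) ↔
      x - w ∈ interior ((t : ℝ) • P) := fun x => by
    rw [hint, ← K.exists_sub_average_mem_interior_iff hB htR]
    refine exists₂_congr fun n m => and_congr_right fun _ => and_congr (by norm_cast) ?_
    exact A.exists_fin_family_mem_image_iff zCast
      (fun b => x - w - (n : ℝ)⁻¹ • ∑ j, b j ∈ interior (K : Set _))
  refine ⟨Set.ext fun x => ?_, fun v => key (zCast v)⟩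
  rw [mem_ofPred_eq, key, singleton_add, image_add_left, mem_preimage, neg_add_eq_sub]

/-- the union over all `n ≥ 1` and all `f = (a₁ + ⋯ + a_m)/n` with
`aⱼ ∈ A` and `m ≥ tn` of the translates `f + w + Int(σ^∨)` equals `w + Int(tP)`;
consequently the sum of the monomial ideals with exponent sets
`{v : v - w - f ∈ Int(σ^∨)}` has exponent set `{v : v - w ∈ Int(tP)}`. -/
theorem union_of_translates_eq_interior_dilate
    {d s : ℕ} (g : Fin s → Fin d → ℤ)
    (C : Set (Fin d → ℝ)) (hC : C = coneOf fun i => zCast (g i))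
    (hsc : C ∩ (-C) = {0}) (hfd : Submodule.span ℝ C = ⊤)
    (w : Fin d → ℝ) (hwC : w ∈ C) (hwq : ∃ wq : Fin d → ℚ, w = fun i => (wq i : ℝ))
    (A : Finset (Fin d → ℤ)) (hA : A.Nonempty) (hAC : ∀ a ∈ A, zCast a ∈ C)
    (P : Set (Fin d → ℝ)) (hP : P = convexHull ℝ (zCast '' ↑A) + C)
    (t : ℚ) (ht : 0 < t) :
    ({x : Fin d → ℝ | ∃ n m : ℕ, 0 < n ∧ t * (n : ℚ) ≤ (m : ℚ) ∧
        ∃ a : Fin m → Fin d → ℤ, (∀ j, a j ∈ A) ∧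
          x - w - (n : ℝ)⁻¹ • (∑ j, zCast (a j)) ∈ interior C} =
      {w} + interior ((t : ℝ) • P)) ∧
    (∀ v : Fin d → ℤ,
      (∃ n m : ℕ, 0 < n ∧ t * (n : ℚ) ≤ (m : ℚ) ∧
        ∃ a : Fin m → Fin d → ℤ, (∀ j, a j ∈ A) ∧
          zCast v - w - (n : ℝ)⁻¹ • (∑ j, zCast (a j)) ∈ interior C) ↔
      zCast v - w ∈ interior ((t : ℝ) • P)) :=
  union_of_translates_eq_interior_dilate_general g C hC hfd w A hAC P hP t ht
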